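/- arXiv:2103.15870 — 2 statements merged into one kernel-verified Lean document; each statement's English description precedes it below -/
import Mathlib

section
/- Let G be the digraph on V = {v_0,…,v_5} with edges (v_0,v_1),(v_0,v_2),(v_1,v_3),(v_1,v_4),(v_2,v_3),(v_2,v_4),(v_5,v_3),(v_5,v_4), let f : V → ℝ with f(v_1) ≠ 0 or f(v_2) ≠ 0, and let α = Σ_v f(v) ∂/∂v. Then Ω_2(G,α,0;ℝ) = Span{f(v_2)v_0v_1v_3 − f(v_1)v_0v_2v_3, f(v_2)v_0v_1v_4 − f(v_1)v_0v_2v_4} is 2-dimensional. -/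
open Finsupp

/-- The `f`-weighted boundary operator `∂^f(v_0…v_n) = Σ_i (−1)^i f(v_i) v_0…v̂_i…v_n`. -/
noncomputable def weightedD {V : Type*} (R : Type*) [CommRing R] (f : V → R) :
    (List V →₀ R) →ₗ[R] (List V →₀ R) :=
  Finsupp.lift (List V →₀ R) R (List V) fun l =>
    ∑ i : Fin l.length, ((-1 : R) ^ (i : ℕ) * f (l.get i)) •
      Finsupp.single (l.eraseIdx i) (1 : R)

/-- `A_m(G;R)` (`ℤ`-indexed, `⊥` for `m < 0`): the span of allowed elementary
`m`-paths (lists with `m+1` vertices following the edge relation `E`). -/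
noncomputable def allowedSub (R : Type*) {V : Type*} [CommRing R] (E : V → V → Prop)
    (m : ℤ) : Submodule R (List V →₀ R) :=
  Submodule.span R
    {x | ∃ l : List V, l.Chain' E ∧ (l.length : ℤ) = m + 1 ∧ x = Finsupp.single l 1}

/-- `Ω_m(G,α;R) = A_m(G;R) ∩ α⁻¹(A_{m−k}(G;R))` for a degree-`k` operator `α`. -/
noncomputable def omegaSub (R : Type*) {V : Type*} [CommRing R] (E : V → V → Prop)
    (α : (List V →₀ R) →ₗ[R] (List V →₀ R)) (k : ℕ) (m : ℤ) :
    Submodule R (List V →₀ R) :=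
  allowedSub R E m ⊓ (allowedSub R E (m - k)).comap α

/-!
Every allowed 2-path of this digraph has the form `v₀ vᵢ vₖ` with `i ∈ {1, 2}`, `k ∈ {3, 4}`, so an
allowed 2-chain is `x = Σ c_{ik} v₀vᵢvₖ`. Its boundary is allowed except possibly at the faces
`v₀v₃` and `v₀v₄`, which are not edges; their coefficients are `-(f(v₁) c_{1k} + f(v₂) c_{2k})`.
Hence `x ∈ Ω₂` iff both vanish, and as `(f(v₁), f(v₂)) ≠ 0` each equation says that
`c_{1k} v₀v₁vₖ + c_{2k} v₀v₂vₖ` is a multiple of `f(v₂) v₀v₁vₖ − f(v₁) v₀v₂vₖ`.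
The two generators have disjoint supports, so they are independent.
-/
section General

variable {V R : Type*} [CommRing R]

theorem allowedSub_eq_supported (E : V → V → Prop) (m : ℤ) :
    allowedSub R E m = supported R R {l : List V | l.IsChain E ∧ (l.length : ℤ) = m + 1} := by
  rw [supported_eq_span_single, allowedSub]
  congr 1
  ext x
  simp only [Set.mem_image, Set.mem_ofPred_eq, and_assoc, eq_comm]
  rfl

theorem apply_eq_zero_of_mem_allowedSub {E : V → V → Prop} {m : ℤ} {v : List V →₀ R}
    (hv : v ∈ allowedSub R E m) {l : List V} (hl : ¬ l.IsChain E) : v l = 0 := by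
  rw [allowedSub_eq_supported, mem_supported'] at hv
  exact hv l fun h => hl h.1

theorem single_mem_allowedSub {E : V → V → Prop} {l : List V} (hl : l.IsChain E) {m : ℤ}
    (hm : (l.length : ℤ) = m + 1) : single l (1 : R) ∈ allowedSub R E m :=
  Submodule.subset_span ⟨l, hl, hm, rfl⟩

theorem weightedD_single_triple (f : V → R) (a b c : V) :
    weightedD R f (single [a, b, c] 1) =
      f a • single [b, c] 1 - f b • single [a, c] 1 + f c • single [a, b] 1 := by
  rw [weightedD, lift_apply, sum_single_index (by simp), one_smul]
  change ∑ i : Fin 3, _ = _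
  simp only [Fin.sum_univ_three, Fin.val_zero, Fin.val_one, Fin.val_two, List.get, List.eraseIdx]
  module

-- The two occurrences of the face `[a, c]`, which need not be allowed, cancel.
theorem weightedD_square (f : V → R) (a b b' c : V) :
    weightedD R f (f b' • single [a, b, c] 1 - f b • single [a, b', c] 1) =
      f b' • (f a • single [b, c] 1 + f c • single [a, b] 1) -
        f b • (f a • single [b', c] 1 + f c • single [a, b'] 1) := by
  rw [map_sub, map_smul, map_smul, weightedD_single_triple, weightedD_single_triple]
  module

theorem square_mem_omegaSub {E : V → V → Prop} (f : V → R) {a b b' c : V} (hab : E a b)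
    (hbc : E b c) (hab' : E a b') (hb'c : E b' c) :
    f b' • single [a, b, c] 1 - f b • single [a, b', c] 1 ∈ omegaSub R E (weightedD R f) 1 2 := by
  have edge {x y : V} (h : E x y) : single [x, y] (1 : R) ∈ allowedSub R E (2 - (1 : ℕ)) :=
    single_mem_allowedSub (List.isChain_pair.2 h) (by norm_num)
  have path {x y z : V} (h : E x y) (h' : E y z) : single [x, y, z] (1 : R) ∈ allowedSub R E 2 :=
    single_mem_allowedSub (by simp [h, h']) (by norm_num)
  refine Submodule.mem_inf.2
    ⟨sub_mem (Submodule.smul_mem _ _ (path hab hbc)) (Submodule.smul_mem _ _ (path hab' hb'c)), ?_⟩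
  rw [Submodule.mem_comap, weightedD_square]
  exact sub_mem
    (Submodule.smul_mem _ _ (add_mem (Submodule.smul_mem _ _ (edge hbc))
      (Submodule.smul_mem _ _ (edge hab))))
    (Submodule.smul_mem _ _ (add_mem (Submodule.smul_mem _ _ (edge hb'c))
      (Submodule.smul_mem _ _ (edge hab'))))

end General

theorem smul_add_smul_mem_span_singleton {K M : Type*} [Field K] [AddCommGroup M] [Module K M]
    {a b p r : K} (hab : a ≠ 0 ∨ b ≠ 0) (h : a * p + b * r = 0) (u w : M) :
    p • u + r • w ∈ K ∙ (b • u - a • w) := by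
  rw [Submodule.mem_span_singleton]
  rcases hab with ha | hb
  · refine ⟨-r / a, ?_⟩
    match_scalars <;> field_simp
    linear_combination -h
  · refine ⟨p / b, ?_⟩
    match_scalars <;> field_simp
    linear_combination -h

-- The digraph `G`, vertex `vᵢ` being `i`; reducible so that `decide` evaluates adjacency.
abbrev exampleAdj (i j : Fin 6) : Prop :=
  (i, j) ∈ ([(0, 1), (0, 2), (1, 3), (1, 4), (2, 3), (2, 4), (5, 3), (5, 4)] : List (Fin 6 × Fin 6))

def exampleTwoPaths : Fin 4 → List (Fin 6) := ![[0, 1, 3], [0, 1, 4], [0, 2, 3], [0, 2, 4]]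

theorem exists_exampleTwoPaths_eq {l : List (Fin 6)} (hl : l.IsChain exampleAdj)
    (h3 : l.length = 3) : ∃ i, exampleTwoPaths i = l := by
  obtain ⟨a, b, c, rfl⟩ := List.length_eq_three.1 h3
  revert a b c
  decide +kernel

section
variable {R : Type*} [CommRing R]

theorem exists_eq_of_mem_allowedSub_two {x : List (Fin 6) →₀ R}
    (hx : x ∈ allowedSub R exampleAdj 2) :
    ∃ p q r s : R, x = p • single [0, 1, 3] 1 + q • single [0, 1, 4] 1 +
      r • single [0, 2, 3] 1 + s • single [0, 2, 4] 1 := by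
  have hle : allowedSub R exampleAdj 2 ≤
      Submodule.span R (Set.range fun i => single (exampleTwoPaths i) 1) := by
    refine Submodule.span_mono ?_
    rintro _ ⟨l, hl, h3, rfl⟩
    obtain ⟨i, rfl⟩ := exists_exampleTwoPaths_eq hl (by omega)
    exact ⟨i, rfl⟩
  obtain ⟨c, rfl⟩ := (Submodule.mem_span_range_iff_exists_fun R).1 (hle hx)
  exact ⟨c 0, c 1, c 2, c 3, by simp [Fin.sum_univ_four, exampleTwoPaths]⟩

theorem weightedD_apply_nonEdge_faces (f : Fin 6 → R) (p q r s : R) :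
    let x : List (Fin 6) →₀ R := p • single [0, 1, 3] 1 + q • single [0, 1, 4] 1 +
      r • single [0, 2, 3] 1 + s • single [0, 2, 4] 1
    weightedD R f x [0, 3] = -(f 1 * p + f 2 * r) ∧
      weightedD R f x [0, 4] = -(f 1 * q + f 2 * s) := by
  simp only [map_add, map_smul, weightedD_single_triple, coe_add, coe_sub, coe_smul, Pi.add_apply,
    Pi.sub_apply, Pi.smul_apply, single_apply, List.cons.injEq, Fin.reduceEq]
  constructor <;> norm_num <;> ring

end

theorem linearIndependent_exampleGenerators {K : Type*} [Field K] {f : Fin 6 → K}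
    (hf : f 1 ≠ 0 ∨ f 2 ≠ 0) :
    LinearIndependent K ![f 2 • single [(0 : Fin 6), 1, 3] (1 : K) - f 1 • single [0, 2, 3] 1,
      f 2 • single [(0 : Fin 6), 1, 4] (1 : K) - f 1 • single [0, 2, 4] 1] := by
  rw [LinearIndependent.pair_iff]
  intro s t h
  have hs1 : s * f 1 = 0 := by simpa using DFunLike.congr_fun h [0, 2, 3]
  have hs2 : s * f 2 = 0 := by simpa using DFunLike.congr_fun h [0, 1, 3]
  have ht1 : t * f 1 = 0 := by simpa using DFunLike.congr_fun h [0, 2, 4]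
  have ht2 : t * f 2 = 0 := by simpa using DFunLike.congr_fun h [0, 1, 4]
  rcases hf with hf | hf
  · exact ⟨(mul_eq_zero_iff_right hf).1 hs1, (mul_eq_zero_iff_right hf).1 ht1⟩
  · exact ⟨(mul_eq_zero_iff_right hf).1 hs2, (mul_eq_zero_iff_right hf).1 ht2⟩

theorem omegaSub_exampleAdj_eq_span {K : Type*} [Field K] {f : Fin 6 → K}
    (hf : f 1 ≠ 0 ∨ f 2 ≠ 0) :
    omegaSub K exampleAdj (weightedD K f) 1 2 = Submodule.span K
      {f 2 • single [(0 : Fin 6), 1, 3] (1 : K) - f 1 • single [0, 2, 3] 1,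
       f 2 • single [(0 : Fin 6), 1, 4] (1 : K) - f 1 • single [0, 2, 4] 1} := by
  refine le_antisymm (fun x hx => ?_) ?_
  · obtain ⟨hxA, hxα⟩ := Submodule.mem_inf.1 hx
    obtain ⟨p, q, r, s, rfl⟩ := exists_eq_of_mem_allowedSub_two hxA
    obtain ⟨h03, h04⟩ := weightedD_apply_nonEdge_faces f p q r s
    rw [apply_eq_zero_of_mem_allowedSub hxα (by decide), zero_eq_neg] at h03 h04
    rw [add_assoc, add_add_add_comm]
    exact add_mem
      (Submodule.span_mono (by simp) (smul_add_smul_mem_span_singleton hf h03 _ _))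
      (Submodule.span_mono (by simp) (smul_add_smul_mem_span_singleton hf h04 _ _))
  · rw [Submodule.span_le, Set.insert_subset_iff, Set.singleton_subset_iff]
    exact ⟨square_mem_omegaSub f (by decide) (by decide) (by decide) (by decide),
      square_mem_omegaSub f (by decide) (by decide) (by decide) (by decide)⟩

/-- for the digraph on `{v_0,…,v_5}`, a weight `f` with `f(v_1) ≠ 0` or
`f(v_2) ≠ 0`, and `α = Σ_v f(v) ∂/∂v`, the space `Ω_2(G,α,0;ℝ)` is spanned by
`f(v_2)v_0v_1v_3 − f(v_1)v_0v_2v_3` and `f(v_2)v_0v_1v_4 − f(v_1)v_0v_2v_4`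
and is `2`-dimensional. -/
theorem omega2_span
    (E : Fin 6 → Fin 6 → Prop)
    (hE : ∀ i j, E i j ↔ (i, j) ∈ ([(0, 1), (0, 2), (1, 3), (1, 4), (2, 3), (2, 4),
      (5, 3), (5, 4)] : List (Fin 6 × Fin 6)))
    (f : Fin 6 → ℝ) (hf : f 1 ≠ 0 ∨ f 2 ≠ 0) :
    omegaSub ℝ E (weightedD ℝ f) 1 2 = Submodule.span ℝ
      {f 2 • Finsupp.single [(0 : Fin 6), 1, 3] (1 : ℝ) - f 1 • Finsupp.single [0, 2, 3] 1,
       f 2 • Finsupp.single [(0 : Fin 6), 1, 4] (1 : ℝ) - f 1 • Finsupp.single [0, 2, 4] 1} ∧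
    Module.finrank ℝ (omegaSub ℝ E (weightedD ℝ f) 1 2) = 2 := by
  obtain rfl : E = exampleAdj := funext₂ fun i j => propext (hE i j)
  have hspan := omegaSub_exampleAdj_eq_span hf
  refine ⟨hspan, ?_⟩
  rw [hspan, ← Matrix.range_cons_cons_empty _ _ ![],
    finrank_span_eq_card (linearIndependent_exampleGenerators hf), Fintype.card_fin]
end

section
/- In the setting of the previous statement with f(v_1) ≠ 0 or f(v_2) ≠ 0 and additionally f(v_0) ≠ 0, the images α(f(v_2)v_0v_1v_3 − f(v_1)v_0v_2v_3) and α(f(v_2)v_0v_1v_4 − f(v_1)v_0v_2v_4) are linearly independent in A_1(G;ℝ), hence dim H_2(G,α,0;ℝ) = 0. -/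
open Finsupp

/-!
Every allowed 2-path of `G` starts at the source `v₀` and then leaves it. On chains of this
shape, the coefficient of `∂^f x` at a path `l` not starting at `v₀` is `f(v₀) · x(v₀ l)`,
since erasing any later vertex keeps `v₀` in front. So `f(v₀) ≠ 0` makes `∂^f` injective on
`A_2(G)`, which kills `Ker(∂^f|Ω_2)` and preserves the linear independence of the two
generators.
-/

variable {V R : Type*} [CommRing R]

def pathsLeaving (v : V) : Set (List V) := {l | ∃ m, l = v :: m ∧ m.head? ≠ some v}

theorem weightedD_single_cons_apply (f : V → R) (v : V) (m : List V) {l : List V}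
    (hl : l.head? ≠ some v) :
    weightedD R f (single (v :: m) 1) l = single m (f v) l := by
  rw [weightedD, lift_apply, sum_single_index (by simp), one_smul, Finset.sum_apply']
  change ∑ k : Fin (m.length + 1), _ = _
  rw [Fin.sum_univ_succ]
  have hsucc (i : Fin m.length) : v :: m.eraseIdx i ≠ l := by
    rintro rfl
    simp at hl
  simp [hsucc]

theorem weightedD_apply_of_mem_supported (f : V → R) (v : V) {x : List V →₀ R}
    (hx : x ∈ supported R R (pathsLeaving v)) {l : List V} (hl : l.head? ≠ some v) :
    weightedD R f x l = f v * x (v :: l) := by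
  rw [supported_eq_span_single] at hx
  induction hx using Submodule.span_induction with
  | mem y hy =>
    obtain ⟨_, ⟨m, rfl, -⟩, rfl⟩ := hy
    rw [weightedD_single_cons_apply f v m hl, single_apply_left List.cons_injective,
      ← smul_eq_mul, ← Finsupp.smul_apply, smul_single_one]
  | zero => simp
  | add y z _ _ hy hz => simp [hy, hz, mul_add]
  | smul c y _ hy => simp [hy, mul_left_comm]

theorem disjoint_supported_pathsLeaving_ker_weightedD [NoZeroDivisors R] {f : V → R} {v : V}
    (hv : f v ≠ 0) :
    Disjoint (supported R R (pathsLeaving v)) (LinearMap.ker (weightedD R f)) := by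
  rw [Submodule.disjoint_def]
  intro x hx hker
  ext l
  by_cases hl : l ∈ pathsLeaving v
  · obtain ⟨m, rfl, hm⟩ := hl
    have := weightedD_apply_of_mem_supported f v hx hm
    rw [LinearMap.mem_ker.mp hker] at this
    simpa [hv] using this.symm
  · exact (mem_supported' R x).mp hx l hl

theorem allowedSub_le_supported {E : V → V → Prop} {m : ℤ} {S : Set (List V)}
    (hS : ∀ l : List V, l.IsChain E → (l.length : ℤ) = m + 1 → l ∈ S) :
    allowedSub R E m ≤ supported R R S := by
  rw [allowedSub, Submodule.span_le]
  rintro _ ⟨l, hl, hlen, rfl⟩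
  exact single_mem_supported R 1 (hS l hl hlen)

def graphEdges : List (Fin 6 × Fin 6) :=
  [(0, 1), (0, 2), (1, 3), (1, 4), (2, 3), (2, 4), (5, 3), (5, 4)]

theorem mem_pathsLeaving_zero_of_isChain {E : Fin 6 → Fin 6 → Prop}
    (hE : ∀ i j, E i j ↔ (i, j) ∈ graphEdges) {l : List (Fin 6)} (hl : l.IsChain E)
    (hlen : (l.length : ℤ) = 2 + 1) : l ∈ pathsLeaving 0 := by
  obtain ⟨a, b, c, rfl⟩ := List.length_eq_three.mp (by exact_mod_cast hlen)
  simp only [List.isChain_cons_cons, List.isChain_singleton, and_true, hE] at hl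
  have two_path_from_source : ∀ a b c : Fin 6,
      (a, b) ∈ graphEdges → (b, c) ∈ graphEdges → a = 0 ∧ b ≠ 0 := by
    decide
  obtain ⟨rfl, hb⟩ := two_path_from_source a b c hl.1 hl.2
  exact ⟨[b, c], rfl, by simpa using hb⟩

/-- if moreover `f(v_0) ≠ 0`, the `α`-images of the two generators of
`Ω_2(G,α,0;ℝ)` are linearly independent, hence `dim H_2(G,α,0;ℝ) = 0`
(since `A_3(G;ℝ) = 0`, `H_2 = Ker(α|Ω_2)`). -/
theorem h2_zero
    (E : Fin 6 → Fin 6 → Prop)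
    (hE : ∀ i j, E i j ↔ (i, j) ∈ ([(0, 1), (0, 2), (1, 3), (1, 4), (2, 3), (2, 4),
      (5, 3), (5, 4)] : List (Fin 6 × Fin 6)))
    (f : Fin 6 → ℝ) (hf : f 1 ≠ 0 ∨ f 2 ≠ 0) (hf0 : f 0 ≠ 0) :
    LinearIndependent ℝ
      ![weightedD ℝ f (f 2 • Finsupp.single [(0 : Fin 6), 1, 3] (1 : ℝ) -
          f 1 • Finsupp.single [0, 2, 3] 1),
        weightedD ℝ f (f 2 • Finsupp.single [(0 : Fin 6), 1, 4] (1 : ℝ) -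
          f 1 • Finsupp.single [0, 2, 4] 1)] ∧
    Module.finrank ℝ ↥(omegaSub ℝ E (weightedD ℝ f) 1 2 ⊓ LinearMap.ker (weightedD ℝ f)) = 0 := by
  have hdisj := disjoint_supported_pathsLeaving_ker_weightedD (R := ℝ) hf0
  constructor
  · let y (i : Fin 6) : List (Fin 6) →₀ ℝ :=
      f 2 • single [0, 1, i] 1 - f 1 • single [0, 2, i] 1
    have hy_mem (i : Fin 6) : y i ∈ supported ℝ ℝ (pathsLeaving 0) :=
      sub_mem (Submodule.smul_mem _ _ (single_mem_supported ℝ 1 ⟨[1, i], rfl, by simp⟩))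
        (Submodule.smul_mem _ _ (single_mem_supported ℝ 1 ⟨[2, i], rfl, by simp⟩))
    rw [LinearIndependent.pair_iff]
    intro s t hst
    have hcomb : s • y 3 + t • y 4 = 0 :=
      Submodule.disjoint_def.mp hdisj _ (add_mem (Submodule.smul_mem _ _ (hy_mem 3)) (Submodule.smul_mem _ _ (hy_mem 4)))
        (by rwa [LinearMap.mem_ker, map_add, map_smul, map_smul])
    have h13 := DFunLike.congr_fun hcomb [0, 1, 3]
    have h23 := DFunLike.congr_fun hcomb [0, 2, 3]
    have h14 := DFunLike.congr_fun hcomb [0, 1, 4]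
    have h24 := DFunLike.congr_fun hcomb [0, 2, 4]
    simp [y] at h13 h23 h14 h24
    tauto
  · have hle : omegaSub ℝ E (weightedD ℝ f) 1 2 ≤ supported ℝ ℝ (pathsLeaving 0) :=
      inf_le_left.trans (allowedSub_le_supported fun _ => mem_pathsLeaving_zero_of_isChain hE)
    rw [(hdisj.mono_left hle).eq_bot, finrank_bot]
end
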